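/- arXiv:0908.3994 — 3 statements merged into one kernel-verified Lean document; each statement's English description precedes it below -/
import Mathlib

section
/- In the category of multirelations, every multirelation R : m → n with m > 0 whose first row is zero (R(0,j) = 0 for all j) factors as R = R' ∘ (ε ⊗ id_{m−1}), where ε : 1 → 0 is the counit multirelation and R' : (m−1) → n is obtained by deleting the first row of R. -/
open Finset

def MRel (m n : ℕ) : Type := Fin m × Fin n → ℕ

def MRel.comp {m n p : ℕ} (R₂ : MRel n p) (R₁ : MRel m n) : MRel m p :=
  fun q => ∑ b : Fin n, R₁ (q.1, b) * R₂ (b, q.2)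

def MRel.id (m : ℕ) : MRel m m := fun p => if p.1 = p.2 then 1 else 0

def MRel.ten {m n m' n' : ℕ} (R : MRel m n) (S : MRel m' n') : MRel (m + m') (n + n') :=
  fun p =>
    match finSumFinEquiv.symm p.1, finSumFinEquiv.symm p.2 with
    | Sum.inl a, Sum.inl b => R (a, b)
    | Sum.inr a, Sum.inr b => S (a, b)
    | _, _ => 0

/-- The counit multirelation `ε : 1 → 0`. -/
def counitM : MRel 1 0 := fun _ => 0

/-- `ε ⊗ id_k : (1 + k) → k`, with the target `0 + k` recast as `k`. -/
def epsTenId (k : ℕ) : MRel (1 + k) k :=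
  fun p => counitM.ten (MRel.id k) (p.1, Fin.cast (Nat.zero_add k).symm p.2)

lemma symm_cast (k : ℕ) (b : Fin k) :
    finSumFinEquiv.symm (Fin.cast (Nat.zero_add k).symm b) = Sum.inr b := by
  apply finSumFinEquiv.symm_apply_eq.mpr
  ext
  simp

lemma epsTenId_eval {k : ℕ} (i : Fin (1 + k)) (b : Fin k) :
    epsTenId k (i, b) =
      match finSumFinEquiv.symm i with
      | Sum.inl _ => 0
      | Sum.inr a => if a = b then 1 else 0 := by
  unfold epsTenId MRel.ten
  rw [symm_cast]
  rcases finSumFinEquiv.symm i with a | a <;> rfl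

/-- Every multirelation `R : m → n` with `m = 1 + k > 0` whose first row is
zero factors as `R = R' ∘ (ε ⊗ id_{m-1})`, where `R' : k → n` is obtained by
deleting the first row of `R`. -/
theorem mrel_first_row_zero_factors {k n : ℕ} (R : MRel (1 + k) n)
    (h : ∀ j : Fin n, R (finSumFinEquiv (Sum.inl (0 : Fin 1)), j) = 0) :
    R = MRel.comp (fun p => R (finSumFinEquiv (Sum.inr p.1), p.2) : MRel k n)
          (epsTenId k) := by
  funext q
  obtain ⟨i, j⟩ := q
  unfold MRel.comp
  simp only [epsTenId_eval]
  rcases e : finSumFinEquiv.symm i with a | a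
  · have hi : i = finSumFinEquiv (Sum.inl a) := by
      rw [← e, Equiv.apply_symm_apply]
    rw [hi]
    have : a = 0 := Subsingleton.elim a 0
    simp [this]
    simpa using h j
  · have hi : i = finSumFinEquiv (Sum.inr a) := by
      rw [← e, Equiv.apply_symm_apply]
    rw [hi]
    rw [Finset.sum_eq_single a]
    · simp
    · intro b _ hb
      simp [hb.symm]
    · simp
end

section
/- The rewriting system on words over the alphabet {H, E} ∪ {W_i | i ∈ ℕ} with rules H·W_i → W_{i+1}·H, H·E → E·H, and W_i·W_j → W_j·W_i for i < j, is terminating and confluent. -/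
/-- Letters of the alphabet `{H, E} ∪ {W_i | i ∈ ℕ}`. -/
inductive Letter : Type
  | H : Letter
  | E : Letter
  | W : ℕ → Letter

open Letter

/-- One rewriting step: a contiguous pair of letters matching the left-hand
side of one of the rules `H·W_i → W_{i+1}·H`, `H·E → E·H`,
`W_i·W_j → W_j·W_i` (for `i < j`) is replaced by the right-hand side. -/
inductive Step : List Letter → List Letter → Prop
  | hw (u v : List Letter) (i : ℕ) :
      Step (u ++ [H, W i] ++ v) (u ++ [W (i + 1), H] ++ v)
  | he (u v : List Letter) :
      Step (u ++ [H, E] ++ v) (u ++ [E, H] ++ v)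
  | ww (u v : List Letter) (i j : ℕ) (hij : i < j) :
      Step (u ++ [W i, W j] ++ v) (u ++ [W j, W i] ++ v)

namespace StepAux

def nonH : Letter → ℕ | .H => 0 | _ => 1
def hcnt : Letter → ℕ | .H => 1 | _ => 0
def bcnt (a : ℕ) : Letter → ℕ | .W b => if a < b then 1 else 0 | _ => 0
def wgt : Letter → List Letter → ℕ
  | .W a, t => (t.map (bcnt a)).sum
  | _, _ => 0

def A : List Letter → ℕ
  | [] => 0
  | x :: t => hcnt x * (t.map nonH).sum + A t

def B : List Letter → ℕ
  | [] => 0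
  | x :: t => wgt x t + B t

lemma A_append (u v : List Letter) :
    A (u ++ v) = A u + (u.map hcnt).sum * (v.map nonH).sum + A v := by
  induction u with
  | nil => simp [A]
  | cons x u ih => simp [A, ih]; ring

lemma wgt_append (x : Letter) (t s : List Letter) :
    wgt x (t ++ s) = wgt x t + wgt x s := by
  cases x <;> simp [wgt]

lemma B_append (u v : List Letter) :
    B (u ++ v) = B u + (u.map (fun x => wgt x v)).sum + B v := by
  induction u with
  | nil => simp [B]
  | cons x u ih => simp [B, wgt_append, ih]; ring

lemma wgt_swap (x p q : Letter) (v : List Letter) :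
    wgt x (p :: q :: v) = wgt x (q :: p :: v) := by
  cases x <;> simp [wgt]; ring

lemma step_dec {x y : List Letter} (h : Step x y) :
    Prod.Lex (· < ·) (· < ·) (A y, B y) (A x, B x) := by
  cases h with
  | hw u v i =>
    apply Prod.Lex.left
    simp [A_append, A, hcnt, nonH]
  | he u v =>
    apply Prod.Lex.left
    simp [A_append, A, hcnt, nonH]
  | ww u v i j hij =>
    have hA : A (u ++ [W j, W i] ++ v) = A (u ++ [W i, W j] ++ v) := by
      simp [A_append, A, hcnt, nonH]
    rw [hA]
    apply Prod.Lex.right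
    simp only [List.append_assoc]
    rw [B_append u ([W j, W i] ++ v), B_append u ([W i, W j] ++ v),
      show (fun x => wgt x ([W j, W i] ++ v)) = fun x => wgt x ([W i, W j] ++ v) from
        funext fun x => (wgt_swap x (W i) (W j) v).symm]
    have h2 : B ([W j, W i] ++ v) < B ([W i, W j] ++ v) := by
      simp [B, wgt, bcnt, hij, Nat.not_lt.mpr hij.le]
      omega
    omega

theorem terminating : WellFounded (fun a b : List Letter => Step b a) :=
  Subrelation.wf (fun h => step_dec h)
    (InvImage.wf (fun w => (A w, B w)) (Nat.lt_wfRel.wf.prod_lex Nat.lt_wfRel.wf))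

/-- The rules as a relation on pairs of letters. -/
inductive R : Letter → Letter → Letter → Letter → Prop
  | hw (i : ℕ) : R H (W i) (W (i + 1)) H
  | he : R H E E H
  | ww (i j : ℕ) (h : i < j) : R (W i) (W j) (W j) (W i)

lemma step_of_R {a b c d : Letter} (h : R a b c d) (u v : List Letter) :
    Step (u ++ [a, b] ++ v) (u ++ [c, d] ++ v) := by
  cases h
  exacts [Step.hw u v _, Step.he u v, Step.ww u v _ _ ‹_›]

lemma step_iff {x y : List Letter} :
    Step x y ↔ ∃ u v a b c d, R a b c d ∧ x = u ++ [a, b] ++ v ∧ y = u ++ [c, d] ++ v := by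
  constructor
  · intro h
    cases h with
    | hw u v i => exact ⟨u, v, _, _, _, _, R.hw i, rfl, rfl⟩
    | he u v => exact ⟨u, v, _, _, _, _, R.he, rfl, rfl⟩
    | ww u v i j hij => exact ⟨u, v, _, _, _, _, R.ww i j hij, rfl, rfl⟩
  · rintro ⟨u, v, a, b, c, d, hr, rfl, rfl⟩
    exact step_of_R hr u v

lemma R_det {a b c d c' d' : Letter} (h1 : R a b c d) (h2 : R a b c' d') :
    c = c' ∧ d = d' := by
  cases h1 <;> cases h2 <;> simp_all

lemma two_two {α : Type} (u₁ u₂ v₁ v₂ : List α) (a b c d : α)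
    (h : u₁ ++ a :: b :: v₁ = u₂ ++ c :: d :: v₂) :
    (u₁ = u₂ ∧ a = c ∧ b = d ∧ v₁ = v₂) ∨
    (u₂ = u₁ ++ [a] ∧ b = c ∧ v₁ = d :: v₂) ∨
    (u₁ = u₂ ++ [c] ∧ d = a ∧ v₂ = b :: v₁) ∨
    (∃ t, u₂ = u₁ ++ a :: b :: t ∧ v₁ = t ++ c :: d :: v₂) ∨
    (∃ t, u₁ = u₂ ++ c :: d :: t ∧ v₂ = t ++ a :: b :: v₁) := by
  induction u₁ generalizing u₂ with
  | nil =>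
    cases u₂ with
    | nil =>
      simp only [List.nil_append] at h
      injection h with h1 h; injection h with h2 h3
      exact Or.inl ⟨rfl, h1, h2, h3⟩
    | cons x u₂ =>
      simp only [List.nil_append, List.cons_append] at h
      injection h with h1 h
      subst h1
      cases u₂ with
      | nil =>
        simp only [List.nil_append] at h
        injection h with h2 h3
        exact Or.inr (Or.inl ⟨rfl, h2, h3⟩)
      | cons y u₂ =>
        simp only [List.cons_append] at h
        injection h with h2 h3
        subst h2
        exact Or.inr (Or.inr (Or.inr (Or.inl ⟨u₂, rfl, h3⟩)))
  | cons x u₁ ih =>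
    cases u₂ with
    | nil =>
      simp only [List.nil_append, List.cons_append] at h
      injection h with h1 h
      subst h1
      cases u₁ with
      | nil =>
        simp only [List.nil_append] at h
        injection h with h2 h3
        exact Or.inr (Or.inr (Or.inl ⟨rfl, h2.symm, h3.symm⟩))
      | cons y u₁ =>
        simp only [List.cons_append] at h
        injection h with h2 h3
        subst h2
        exact Or.inr (Or.inr (Or.inr (Or.inr ⟨u₁, rfl, h3.symm⟩)))
    | cons y u₂ =>
      simp only [List.cons_append] at h
      injection h with h1 h
      subst h1
      rcases ih u₂ h with ⟨h1, h2, h3, h4⟩ | ⟨h1, h2, h3⟩ | ⟨h1, h2, h3⟩ |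
        ⟨t, h1, h2⟩ | ⟨t, h1, h2⟩
      · exact Or.inl ⟨by rw [h1], h2, h3, h4⟩
      · exact Or.inr (Or.inl ⟨by rw [h1]; rfl, h2, h3⟩)
      · exact Or.inr (Or.inr (Or.inl ⟨by rw [h1]; rfl, h2, h3⟩))
      · exact Or.inr (Or.inr (Or.inr (Or.inl ⟨t, by rw [h1]; rfl, h2⟩)))
      · exact Or.inr (Or.inr (Or.inr (Or.inr ⟨t, by rw [h1]; rfl, h2⟩)))

abbrev RT := Relation.ReflTransGen Step

lemma cp {a b c d e c' d' : Letter} (h1 : R a b c d) (h2 : R b e c' d')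
    (u v : List Letter) :
    ∃ z, RT (u ++ [c, d, e] ++ v) z ∧ RT (u ++ [a, c', d'] ++ v) z := by
  cases h1 with
  | hw i =>
    cases h2 with
    | ww i' j hij =>
      refine ⟨u ++ [W (j + 1), W (i + 1), H] ++ v, ?_, ?_⟩
      · have s1 : Step (u ++ [W (i + 1), H, W j] ++ v)
            (u ++ [W (i + 1), W (j + 1), H] ++ v) := by
          simpa using Step.hw (u ++ [W (i + 1)]) v j
        have s2 : Step (u ++ [W (i + 1), W (j + 1), H] ++ v)
            (u ++ [W (j + 1), W (i + 1), H] ++ v) := by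
          simpa using Step.ww u ([H] ++ v) (i + 1) (j + 1) (by omega)
        exact (Relation.ReflTransGen.single s1).tail s2
      · have s1 : Step (u ++ [H, W j, W i] ++ v) (u ++ [W (j + 1), H, W i] ++ v) := by
          simpa using Step.hw u ([W i] ++ v) j
        have s2 : Step (u ++ [W (j + 1), H, W i] ++ v)
            (u ++ [W (j + 1), W (i + 1), H] ++ v) := by
          simpa using Step.hw (u ++ [W (j + 1)]) v i
        exact (Relation.ReflTransGen.single s1).tail s2
  | he => cases h2
  | ww i j hij =>
    cases h2 with
    | ww j' k hjk =>
      refine ⟨u ++ [W k, W j, W i] ++ v, ?_, ?_⟩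
      · have s1 : Step (u ++ [W j, W i, W k] ++ v) (u ++ [W j, W k, W i] ++ v) := by
          simpa using Step.ww (u ++ [W j]) v i k (by omega)
        have s2 : Step (u ++ [W j, W k, W i] ++ v) (u ++ [W k, W j, W i] ++ v) := by
          simpa using Step.ww u ([W i] ++ v) j k hjk
        exact (Relation.ReflTransGen.single s1).tail s2
      · have s1 : Step (u ++ [W i, W k, W j] ++ v) (u ++ [W k, W i, W j] ++ v) := by
          simpa using Step.ww u ([W j] ++ v) i k (by omega)
        have s2 : Step (u ++ [W k, W i, W j] ++ v) (u ++ [W k, W j, W i] ++ v) := by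
          simpa using Step.ww (u ++ [W k]) v i j hij
        exact (Relation.ReflTransGen.single s1).tail s2

lemma locConf {w x y : List Letter} (hx : Step w x) (hy : Step w y) :
    ∃ d, RT x d ∧ RT y d := by
  rw [step_iff] at hx hy
  obtain ⟨u₁, v₁, a₁, b₁, c₁, d₁, r₁, rfl, rfl⟩ := hx
  obtain ⟨u₂, v₂, a₂, b₂, c₂, d₂, r₂, heq, rfl⟩ := hy
  simp only [List.append_assoc, List.cons_append, List.nil_append] at heq
  rcases two_two u₁ u₂ v₁ v₂ a₁ b₁ a₂ b₂ heq with
    ⟨rfl, rfl, rfl, rfl⟩ | ⟨rfl, rfl, rfl⟩ | ⟨rfl, rfl, rfl⟩ | ⟨t, rfl, rfl⟩ | ⟨t, rfl, rfl⟩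
  · obtain ⟨rfl, rfl⟩ := R_det r₁ r₂
    exact ⟨_, Relation.ReflTransGen.refl, Relation.ReflTransGen.refl⟩
  · obtain ⟨z, hz1, hz2⟩ := cp r₁ r₂ u₁ v₂
    exact ⟨z, by simpa using hz1, by simpa using hz2⟩
  · obtain ⟨z, hz1, hz2⟩ := cp r₂ r₁ u₂ v₁
    exact ⟨z, by simpa using hz2, by simpa using hz1⟩
  · refine ⟨u₁ ++ [c₁, d₁] ++ t ++ [c₂, d₂] ++ v₂, ?_, ?_⟩
    · refine Relation.ReflTransGen.single ?_
      simpa using step_of_R r₂ (u₁ ++ [c₁, d₁] ++ t) v₂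
    · refine Relation.ReflTransGen.single ?_
      simpa using step_of_R r₁ u₁ (t ++ [c₂, d₂] ++ v₂)
  · refine ⟨u₂ ++ [c₂, d₂] ++ t ++ [c₁, d₁] ++ v₁, ?_, ?_⟩
    · refine Relation.ReflTransGen.single ?_
      simpa using step_of_R r₂ u₂ (t ++ [c₁, d₁] ++ v₁)
    · refine Relation.ReflTransGen.single ?_
      simpa using step_of_R r₁ (u₂ ++ [c₂, d₂] ++ t) v₁

theorem confluent (a b c : List Letter) (hab : RT a b) (hac : RT a c) :
    ∃ d, RT b d ∧ RT c d := by
  induction a using terminating.induction generalizing b c with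
  | _ a ih =>
  rcases hab.cases_head with rfl | ⟨a₁, ha₁, h₁b⟩
  · exact ⟨c, hac, Relation.ReflTransGen.refl⟩
  rcases hac.cases_head with rfl | ⟨a₂, ha₂, h₂c⟩
  · exact ⟨b, Relation.ReflTransGen.refl, hab⟩
  obtain ⟨d₀, hd₁, hd₂⟩ := locConf ha₁ ha₂
  obtain ⟨e, hbe, hde⟩ := ih a₁ ha₁ b d₀ h₁b hd₁
  obtain ⟨f, hef, hcf⟩ := ih a₂ ha₂ e c (hd₂.trans hde) h₂c
  exact ⟨f, hbe.trans hef, hcf⟩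

end StepAux

/-- The rewriting system is terminating (there is no infinite rewriting
sequence, i.e. the converse of `Step` is well-founded) and confluent. -/
theorem step_terminating_and_confluent :
    (WellFounded (fun a b : List Letter => Step b a)) ∧
    (∀ a b c : List Letter, Relation.ReflTransGen Step a b →
      Relation.ReflTransGen Step a c →
      ∃ d, Relation.ReflTransGen Step b d ∧ Relation.ReflTransGen Step c d) := by
  exact ⟨StepAux.terminating, StepAux.confluent⟩
end

section
/- Every canonical form word over the grammar φ ::= Z | W_i φ | E φ | H φ that is normal with respect to the rewriting rules H·W_i → W_{i+1}·H, H·E → E·H, W_i·W_j → W_j·W_i (for i < j) and represents a multirelation m → n is uniquely determined by that multirelation: the interpretation map from normal forms of type m → n to multirelations m → n is injective. -/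
/-- Typed words over the grammar `φ ::= Z | W_i φ | E φ | H φ`, with
`Z : 0 → 0`; `E φ : (m+1) → n` when `φ : m → n` (discarding the first input);
`H φ : m → (n+1)` when `φ : m → n` (adding a fresh output); and
`W i φ : (m+1) → n` when `φ : (m+1) → n` (incrementing coefficient `(0, i)`). -/
inductive Wd : ℕ → ℕ → Type
  | Z : Wd 0 0
  | E {m n : ℕ} (φ : Wd m n) : Wd (m + 1) n
  | H {m n : ℕ} (φ : Wd m n) : Wd m (n + 1)
  | W {m n : ℕ} (i : Fin n) (φ : Wd (m + 1) n) : Wd (m + 1) n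

/-- Interpretation of a word of type `m → n` as a multirelation
`Fin m × Fin n → ℕ`: `Z` is the empty multirelation, `E` adds a zero first
row, `H` adds a zero fresh output column (shifting the others), and `W i`
increments the coefficient `(0, i)`. -/
def Wd.interp : ∀ {m n : ℕ}, Wd m n → (Fin m × Fin n → ℕ)
  | _, _, .Z => fun _ => 0
  | _, _, .E φ => fun p => Fin.cases 0 (fun i => φ.interp (i, p.2)) p.1
  | _, _, .H φ => fun p => Fin.cases 0 (fun j => φ.interp (p.1, j)) p.2
  | _, _, .W i φ => fun p => φ.interp p + (if p.1 = 0 ∧ p.2 = i then 1 else 0)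

/-- Canonical forms: words that are normal with respect to the rewriting rules
`H·W_i → W_{i+1}·H`, `H·E → E·H` and `W_i·W_j → W_j·W_i` (for `i < j`):
`H` is never followed by a `W` or an `E`, and consecutive `W` indices are
non-increasing. -/
inductive Wd.Normal : ∀ {m n : ℕ}, Wd m n → Prop
  | z : Wd.Normal Wd.Z
  | e {m n : ℕ} {φ : Wd m n} : Wd.Normal φ → Wd.Normal (Wd.E φ)
  | hz : Wd.Normal (Wd.H Wd.Z)
  | hh {m n : ℕ} {φ : Wd m n} : Wd.Normal (Wd.H φ) → Wd.Normal (Wd.H (Wd.H φ))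
  | we {m n : ℕ} {φ : Wd m n} (i : Fin n) :
      Wd.Normal φ → Wd.Normal (Wd.W i (Wd.E φ))
  | wh {m n : ℕ} {φ : Wd (m + 1) n} (i : Fin (n + 1)) :
      Wd.Normal (Wd.H φ) → Wd.Normal (Wd.W i (Wd.H φ))
  | ww {m n : ℕ} {φ : Wd (m + 1) n} (i j : Fin n) (h : (j : ℕ) ≤ (i : ℕ)) :
      Wd.Normal (Wd.W j φ) → Wd.Normal (Wd.W i (Wd.W j φ))


lemma Wd.Normal.h_inputs : ∀ {m n : ℕ} {φ : Wd m n}, (Wd.H φ).Normal → m = 0 := by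
  intro m n φ hn
  cases hn with
  | hz => rfl
  | hh h' => exact h'.h_inputs

lemma Wd.Normal.inv_E {m n : ℕ} {φ : Wd m n} (h : (Wd.E φ).Normal) : φ.Normal := by
  cases h; assumption

lemma Wd.Normal.inv_H {m n : ℕ} {φ : Wd m n} (h : (Wd.H φ).Normal) : φ.Normal := by
  cases h with
  | hz => exact .z
  | hh h' => exact h'

lemma Wd.Normal.inv_W {m n : ℕ} {i : Fin n} {φ : Wd (m + 1) n}
    (h : (Wd.W i φ).Normal) : φ.Normal := by
  cases h with
  | we _ h' => exact h'.e
  | wh _ h' => exact h'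
  | ww _ _ _ h' => exact h'

lemma interp_W_zero : ∀ {m n : ℕ} (i : Fin n) (φ : Wd (m + 1) n),
    (Wd.W i φ).Normal → ∀ j : Fin n, (i : ℕ) < (j : ℕ) →
    (Wd.W i φ).interp (0, j) = 0
  | m, n, i, .E χ, _, j, hij => by
    have hji : j ≠ i := by intro e; subst e; omega
    simp [Wd.interp, hji]
  | m, _, i, .H χ, h, j, hij => by
    cases h with
    | wh _ h' => exact absurd h'.h_inputs (by omega)
  | m, n, i, .W k χ, h, j, hij => by
    cases h with
    | ww _ _ hle h' =>
      have hji : j ≠ i := by intro e; subst e; omega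
      have h0 : (Wd.W k χ).interp (0, j) = 0 := interp_W_zero k χ h' j (by omega)
      simp [Wd.interp, hji] at h0 ⊢
      exact h0

lemma normal_interp_inj_aux : ∀ {m n : ℕ} (φ : Wd m n), φ.Normal →
    ∀ ψ : Wd m n, ψ.Normal → φ.interp = ψ.interp → φ = ψ := by
  intro m n φ
  induction φ with
  | Z => intro _ ψ _ _; cases ψ; rfl
  | E φ₁ ih =>
    intro hφ ψ hψ h
    cases ψ with
    | E ψ₁ =>
      congr 1
      apply ih hφ.inv_E ψ₁ hψ.inv_E
      funext p
      have := congrFun h (p.1.succ, p.2)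
      simpa [Wd.interp] using this
    | H ψ₁ => exact absurd hψ.h_inputs (by omega)
    | W i ψ₁ =>
      have := congrFun h (0, i)
      simp [Wd.interp] at this
  | H φ₁ ih =>
    intro hφ ψ hψ h
    cases ψ with
    | H ψ₁ =>
      congr 1
      apply ih hφ.inv_H ψ₁ hψ.inv_H
      funext p
      have := congrFun h (p.1, p.2.succ)
      simpa [Wd.interp] using this
    | E ψ₁ => exact absurd hφ.h_inputs (by omega)
    | W i ψ₁ => exact absurd hφ.h_inputs (by omega)
  | W i φ₁ ih =>
    intro hφ ψ hψ h
    cases ψ with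
    | E ψ₁ =>
      have := congrFun h (0, i)
      simp [Wd.interp] at this
    | H ψ₁ => exact absurd hψ.h_inputs (by omega)
    | W i' ψ₁ =>
      have hii : i = i' := by
        rcases lt_trichotomy (i : ℕ) (i' : ℕ) with hlt | heq | hgt
        · have h0 := congrFun h (0, i')
          rw [interp_W_zero i φ₁ hφ i' hlt] at h0
          simp [Wd.interp] at h0
        · exact Fin.ext heq
        · have h0 := (congrFun h (0, i)).symm
          rw [interp_W_zero i' ψ₁ hψ i hgt] at h0
          simp [Wd.interp] at h0
      subst hii
      congr 1
      apply ih hφ.inv_W ψ₁ hψ.inv_W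
      funext p
      have h0 := congrFun h p
      simp only [Wd.interp] at h0
      exact Nat.add_right_cancel h0

/-- A normal form of type `m → n` is uniquely determined by the multirelation
it represents: the interpretation map is injective on normal forms. -/
theorem normal_form_interp_injective {m n : ℕ} (φ ψ : Wd m n)
    (hφ : φ.Normal) (hψ : ψ.Normal) (h : φ.interp = ψ.interp) : φ = ψ := by
  exact normal_interp_inj_aux φ hφ ψ hψ h
end
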